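/- arXiv:2106.06706 — 2 statements merged into one kernel-verified Lean document; each statement's English description precedes it below -/
import Mathlib

section
/- In the repeated stochastic team formation model where all teams (hyperedges) have cardinality at most k, for every stable matching process SM (i.e., for every tie-breaking rule in the greedy step), every online algorithm ALG, and all nonnegative round weights w_1, …, w_T, the expected reward of SM is at least 1/(2k) times the expected reward of ALG. -/
open Finset

/-- A hypergraph of potential teams: each hyperedge (team) is a subset of the
agent set `V`, and distinct hyperedges are distinct subsets. -/
structure TeamStruct (V H : Type) where
  mem : H → Finset V
  mem_injective : Function.Injective mem

variable {V H : Type}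

/-- A hypergraph matching: a family of pairwise disjoint teams. -/
def TeamStruct.IsHMatching (G : TeamStruct V H) (M : Finset H) : Prop :=
  ∀ S ∈ M, ∀ T ∈ M, S ≠ T → Disjoint (G.mem S) (G.mem T)

/-- `select` is an online algorithm: under each realization `ω` it selects a
hypergraph matching in every round, and its round-`t` selection depends only
on its own selections in earlier rounds and on the realized values of the
teams it selected in those rounds. -/
def TeamStruct.IsOnline (G : TeamStruct V H) (select : (H → Bool) → ℕ → Finset H) : Prop :=
  (∀ ω t, G.IsHMatching (select ω t)) ∧
  (∀ ω ω' t, (∀ s, s < t → ∀ S ∈ select ω s, ω' S = ω S) → select ω' t = select ω t)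

/-- Probability of the realization `ω` under independent Bernoulli teams. -/
def probOf [Fintype H] (p : H → ℝ) (ω : H → Bool) : ℝ :=
  ∏ S : H, if ω S then p S else 1 - p S

/-- Expected reward of an algorithm: the `w`-weighted expected number of
successful selected teams over rounds `0, …, T-1`. -/
noncomputable def expectedReward [Fintype H] [DecidableEq H] (p : H → ℝ) (w : ℕ → ℝ)
    (T : ℕ) (select : (H → Bool) → ℕ → Finset H) : ℝ :=
  ∑ ω : H → Bool, probOf p ω *
    ∑ t ∈ Finset.range T, w t * ((select ω t).filter (fun S => ω S)).card

/-- Teams selected by `select` in rounds before `t` under realization `ω`. -/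
def selectedBefore [DecidableEq H] (select : (H → Bool) → ℕ → Finset H)
    (ω : H → Bool) (t : ℕ) : Finset H :=
  (Finset.range t).biUnion (select ω)

/-- A team `S` is available for the greedy step, given the dead (previously
selected and revealed unsuccessful) teams `D` and the current partial matching
`M`: it is not dead, not already in `M`, and is disjoint from every member of
`M`. -/
def TeamStruct.Avail (G : TeamStruct V H) (D M : Finset H) (S : H) : Prop :=
  S ∉ D ∧ S ∉ M ∧ ∀ T ∈ M, Disjoint (G.mem S) (G.mem T)

/-- `L` records, in order, the teams added by a run of the greedy procedure
extending the committed matching `A`, avoiding dead teams `D`: each added team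
is available (w.r.t. the matching built so far) of maximum probability, and at
the end no available team remains. -/
def TeamStruct.IsGreedyRun [DecidableEq H] (G : TeamStruct V H) (p : H → ℝ)
    (D A : Finset H) (L : List H) : Prop :=
  (∀ i : Fin L.length,
      G.Avail D (A ∪ (L.take i).toFinset) (L.get i) ∧
      ∀ S, G.Avail D (A ∪ (L.take i).toFinset) S → p S ≤ p (L.get i)) ∧
  (∀ S, ¬ G.Avail D (A ∪ L.toFinset) S)

/-- `select` is a stable matching process for team formation: an online
algorithm which in each round keeps all previously selected successful teams
and augments them greedily (ties broken arbitrarily). -/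
def TeamStruct.IsSM [DecidableEq H] (G : TeamStruct V H) (p : H → ℝ)
    (select : (H → Bool) → ℕ → Finset H) : Prop :=
  G.IsOnline select ∧
  ∀ ω t,
    ∃ L : List H,
      G.IsGreedyRun p
        ((selectedBefore select ω t).filter (fun S => ¬ ω S))
        ((selectedBefore select ω t).filter (fun S => ω S)) L ∧
      select ω t = (selectedBefore select ω t).filter (fun S => ω S) ∪ L.toFinset

/-!
Fix a round `t` and let `A` be the set of teams the stable matching process SM has selected by
round `t` and found successful; its successful teams in round `t` are exactly `A`. A successful team `S` played
by the online algorithm in round `t` either clashes with a member `T` of `A`, which happens for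
at most `max 1 |T| ≤ k` members of its matching, or is unblocked. Whether `S` is unblocked in
the realization where `S` is made to succeed is independent of `ω S`, so the expected number of
unblocked successful teams is the expected `p`-mass of such teams. For each of them SM, which
has never selected `S`, greedily picked in the first round where the algorithm plays `S` a new
team `B` meeting `S` with `p B ≥ p S`; such a `B` is met by at most `|B| ≤ k` teams of that
round's matching. So that mass is at most `k` times the expected `p`-mass of the teams SM has
selected, which by the same independence argument is `E |A|`. In total the algorithm earns at
most `2k E |A|` per round.
-/

open Function

section SelectedBefore

variable [DecidableEq H] (sel : (H → Bool) → ℕ → Finset H) (ω : H → Bool)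

theorem selectedBefore_mono {s t : ℕ} (h : s ≤ t) :
    selectedBefore sel ω s ⊆ selectedBefore sel ω t :=
  biUnion_subset_biUnion_of_subset_left _ (range_subset_range.2 h)

theorem select_subset_selectedBefore {s t : ℕ} (h : s < t) :
    sel ω s ⊆ selectedBefore sel ω t :=
  fun _ hx => mem_biUnion.2 ⟨s, mem_range.2 h, hx⟩

theorem selectedBefore_succ (t : ℕ) :
    selectedBefore sel ω (t + 1) = selectedBefore sel ω t ∪ sel ω t := by
  rw [selectedBefore, range_add_one, biUnion_insert, union_comm]
  rfl

theorem exists_first_select {S : H} {t : ℕ} (h : S ∈ sel ω t) :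
    ∃ r ≤ t, S ∈ sel ω r ∧ S ∉ selectedBefore sel ω r := by
  have hex : ∃ r, S ∈ sel ω r := ⟨t, h⟩
  refine ⟨Nat.find hex, Nat.find_min' hex h, Nat.find_spec hex, fun hmem => ?_⟩
  obtain ⟨s, hs, hSs⟩ := mem_biUnion.1 hmem
  exact Nat.find_min hex (mem_range.1 hs) hSs

theorem eq_of_mem_select_of_not_mem_selectedBefore {B : H} {r r' : ℕ}
    (h : B ∈ sel ω r) (h_new : B ∉ selectedBefore sel ω r)
    (h' : B ∈ sel ω r') (h'_new : B ∉ selectedBefore sel ω r') : r = r' := by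
  by_contra hne
  rcases Nat.lt_or_gt_of_ne hne with hlt | hlt
  · exact h'_new (select_subset_selectedBefore sel ω hlt h)
  · exact h_new (select_subset_selectedBefore sel ω hlt h')

end SelectedBefore

namespace TeamStruct

variable [DecidableEq V] {G : TeamStruct V H}

theorem IsHMatching.card_filter_not_disjoint_le {M : Finset H} (hM : G.IsHMatching M)
    (B : Finset V) : #{S ∈ M | ¬ Disjoint (G.mem S) B} ≤ #B := by
  refine card_le_card_of_forall_subsingleton (fun S v => v ∈ G.mem S) (fun S hS => ?_)
    (fun v _ S₁ hS₁ S₂ hS₂ => ?_)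
  · obtain ⟨v, hvS, hvB⟩ := not_disjoint_iff.1 (mem_filter.1 hS).2
    exact ⟨v, hvB, hvS⟩
  · by_contra hne
    exact disjoint_left.1 (hM S₁ (mem_filter.1 hS₁.1).1 S₂ (mem_filter.1 hS₂.1).1 hne)
      hS₁.2 hS₂.2

/-- Two teams clash when they cannot both be members of a matching. -/
def Clash (G : TeamStruct V H) (S T : H) : Prop :=
  S = T ∨ ¬ Disjoint (G.mem S) (G.mem T)

instance [DecidableEq H] (S T : H) : Decidable (G.Clash S T) :=
  inferInstanceAs (Decidable (_ ∨ _))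

theorem IsHMatching.card_filter_clash_le [DecidableEq H] {M : Finset H} (hM : G.IsHMatching M)
    (T : H) : #{S ∈ M | G.Clash S T} ≤ max 1 #(G.mem T) := by
  rcases (G.mem T).eq_empty_or_nonempty with hT | hT
  · calc #{S ∈ M | G.Clash S T} ≤ #{T} := by
          refine card_le_card fun S hS => mem_singleton.2 ?_
          simpa [Clash, hT] using (mem_filter.1 hS).2
      _ ≤ max 1 #(G.mem T) := by simp
  · have hfilter : {S ∈ M | G.Clash S T} = {S ∈ M | ¬ Disjoint (G.mem S) (G.mem T)} := by
      refine filter_congr fun S _ => or_iff_right_of_imp ?_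
      rintro rfl
      simpa using hT.ne_empty
    rw [hfilter]
    exact (hM.card_filter_not_disjoint_le _).trans (le_max_right _ _)

theorem IsHMatching.card_biUnion_filter_clash_le [DecidableEq H] {M : Finset H}
    (hM : G.IsHMatching M) (A : Finset H) {k : ℕ} (hk : 1 ≤ k)
    (hcard : ∀ T ∈ A, #(G.mem T) ≤ k) :
    #(A.biUnion fun T => {S ∈ M | G.Clash S T}) ≤ k * #A :=
  calc #(A.biUnion fun T => {S ∈ M | G.Clash S T})
      ≤ ∑ T ∈ A, #{S ∈ M | G.Clash S T} := card_biUnion_le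
    _ ≤ ∑ _T ∈ A, k := sum_le_sum fun T hT =>
        (hM.card_filter_clash_le T).trans (max_le hk (hcard T hT))
    _ = k * #A := by rw [sum_const, smul_eq_mul, mul_comm]

end TeamStruct

theorem probOf_nonneg [Fintype H] {p : H → ℝ} (hp : ∀ S, 0 ≤ p S ∧ p S ≤ 1)
    (ω : H → Bool) : 0 ≤ probOf p ω :=
  prod_nonneg fun S _ => by
    split_ifs
    exacts [(hp S).1, sub_nonneg.2 (hp S).2]

section Expectation

variable [Fintype H] [DecidableEq H] (p : H → ℝ)

def expectOf (f : (H → Bool) → ℝ) : ℝ :=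
  ∑ ω, probOf p ω * f ω

variable {p}

theorem expectOf_add (f g : (H → Bool) → ℝ) :
    expectOf p (fun ω => f ω + g ω) = expectOf p f + expectOf p g := by
  simp only [expectOf, mul_add, sum_add_distrib]

theorem expectOf_const_mul (c : ℝ) (f : (H → Bool) → ℝ) :
    expectOf p (fun ω => c * f ω) = c * expectOf p f := by
  simp only [expectOf, mul_sum, mul_left_comm]

theorem expectOf_sum {ι : Type} (s : Finset ι) (f : ι → (H → Bool) → ℝ) :
    expectOf p (fun ω => ∑ i ∈ s, f i ω) = ∑ i ∈ s, expectOf p (f i) := by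
  simp only [expectOf, mul_sum]
  exact sum_comm

theorem expectOf_mono (hp : ∀ S, 0 ≤ p S ∧ p S ≤ 1) {f g : (H → Bool) → ℝ}
    (h : ∀ ω, f ω ≤ g ω) : expectOf p f ≤ expectOf p g :=
  sum_le_sum fun ω _ => mul_le_mul_of_nonneg_left (h ω) (probOf_nonneg hp ω)

theorem sum_ite_apply_eq_sum_ite_not {M : Type} [AddCommMonoid M] {S : H}
    {g : (H → Bool) → M} (hg : ∀ ω b, g (update ω S b) = g ω) :
    ∑ ω, (if ω S then g ω else 0) = ∑ ω, (if ω S then 0 else g ω) := by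
  have hσ : Involutive fun ω : H → Bool => update ω S (!ω S) := fun ω => by simp
  rw [← Equiv.sum_comp (hσ.toPerm _)]
  refine sum_congr rfl fun ω _ => ?_
  cases hωS : ω S <;> simp [hωS, hg]

theorem expectOf_ite_apply (S : H) {g : (H → Bool) → ℝ}
    (hg : ∀ ω b, g (update ω S b) = g ω) :
    expectOf p (fun ω => if ω S then g ω else 0) = p S * expectOf p g := by
  set R : (H → Bool) → ℝ := fun ω => ∏ T ∈ univ.erase S, if ω T then p T else 1 - p T
  have hprob : ∀ ω, probOf p ω = (if ω S then p S else 1 - p S) * R ω := fun ω =>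
    (mul_prod_erase univ _ (mem_univ S)).symm
  have hR : ∀ ω b, R (update ω S b) = R ω := fun ω b =>
    prod_congr rfl fun T hT => by rw [update_of_ne (ne_of_mem_erase hT)]
  have hflip := sum_ite_apply_eq_sum_ite_not (M := ℝ) (S := S) (g := fun ω => R ω * g ω)
    fun ω b => by rw [hR, hg]
  have hsplit : expectOf p g = p S * ∑ ω, (if ω S then R ω * g ω else 0)
      + (1 - p S) * ∑ ω, (if ω S then 0 else R ω * g ω) := by
    simp only [expectOf, hprob, mul_sum, ← sum_add_distrib]
    refine sum_congr rfl fun ω _ => ?_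
    cases ω S <;> simp only [Bool.false_eq_true, if_true, if_false] <;> ring
  rw [hsplit, ← hflip, ← add_mul, add_sub_cancel, one_mul, expectOf, mul_sum]
  refine sum_congr rfl fun ω _ => ?_
  rw [hprob]
  cases ω S <;> simp only [Bool.false_eq_true, if_true, if_false] <;> ring

/-- On `{ω S}` the realization `update ω S true` is `ω` itself, while `P S (update ω S true)`
does not depend on `ω S`. -/
theorem expectOf_card_filter (P : H → (H → Bool) → Prop) [∀ S ω, Decidable (P S ω)] :
    expectOf p (fun ω => (#{S | ω S ∧ P S ω} : ℝ))
      = expectOf p (fun ω => ∑ S ∈ {S | P S (update ω S true)}, p S) := by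
  have hindicator : ∀ ω, (#{S | ω S ∧ P S ω} : ℝ)
      = ∑ S, if ω S then (if P S (update ω S true) then 1 else 0) else 0 := fun ω => by
    rw [natCast_card_filter]
    refine sum_congr rfl fun S _ => ?_
    cases hωS : ω S
    · simp
    · rw [← hωS, update_eq_self]
      simp [hωS]
  simp only [hindicator, sum_filter, expectOf_sum]
  refine sum_congr rfl fun S _ => ?_
  rw [expectOf_ite_apply S fun ω b => by rw [update_idem], ← expectOf_const_mul]
  simp only [mul_ite, mul_one, mul_zero]

theorem expectedReward_eq_sum_expectOf (w : ℕ → ℝ) (T : ℕ)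
    (sel : (H → Bool) → ℕ → Finset H) :
    expectedReward p w T sel
      = ∑ t ∈ range T, w t * expectOf p (fun ω => (#{S ∈ sel ω t | ω S} : ℝ)) := by
  simp only [expectedReward, expectOf, mul_sum]
  rw [sum_comm]
  exact sum_congr rfl fun t _ => sum_congr rfl fun ω _ => mul_left_comm _ _ _

end Expectation

theorem sum_le_mul_sum_of_exists_le {α β : Type*} (r : α → β → Prop)
    [∀ a b, Decidable (r a b)] {s : Finset α} {t : Finset β} {f : α → ℝ} {g : β → ℝ} {k : ℕ}
    (hs : ∀ a ∈ s, ∃ b ∈ t, f a ≤ g b ∧ r a b)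
    (ht : ∀ b ∈ t, #{a ∈ s | r a b} ≤ k) (hg : ∀ b ∈ t, 0 ≤ g b) :
    ∑ a ∈ s, f a ≤ k * ∑ b ∈ t, g b :=
  calc ∑ a ∈ s, f a
      ≤ ∑ a ∈ s, ∑ b ∈ t, if r a b then g b else 0 := sum_le_sum fun a ha => by
        obtain ⟨b, hb, hfg, hr⟩ := hs a ha
        calc f a ≤ if r a b then g b else 0 := by rwa [if_pos hr]
          _ ≤ _ := single_le_sum (f := fun b => if r a b then g b else 0)
            (fun b hb => by split_ifs <;> simp [hg b hb]) hb
    _ = ∑ b ∈ t, (#{a ∈ s | r a b} : ℝ) * g b := by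
        rw [sum_comm]
        simp only [← sum_filter, sum_const, nsmul_eq_mul]
    _ ≤ ∑ b ∈ t, (k : ℝ) * g b :=
        sum_le_sum fun b hb => mul_le_mul_of_nonneg_right (by exact_mod_cast ht b hb) (hg b hb)
    _ = k * ∑ b ∈ t, g b := (mul_sum _ _ _).symm

namespace TeamStruct

variable [DecidableEq H] {G : TeamStruct V H} {sel : (H → Bool) → ℕ → Finset H}
  {ω ω' : H → Bool} {S : H}

theorem IsOnline.select_eq_of_eq_off (hon : G.IsOnline sel) (hω : ∀ X, X ≠ S → ω' X = ω X)
    {r : ℕ} (hS : S ∉ selectedBefore sel ω r) : sel ω' r = sel ω r :=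
  hon.2 ω ω' r fun _ hs X hX =>
    hω X fun h => hS (h ▸ select_subset_selectedBefore sel ω hs hX)

theorem IsOnline.exists_mem_select_of_eq_off (hon : G.IsOnline sel)
    (hω : ∀ X, X ≠ S → ω' X = ω X) {t : ℕ} (h : S ∈ sel ω' t) :
    ∃ r ≤ t, S ∈ sel ω r := by
  obtain ⟨r, hrt, hSr, hS_new⟩ := exists_first_select sel ω' h
  refine ⟨r, hrt, ?_⟩
  rwa [hon.select_eq_of_eq_off (fun X hX => (hω X hX).symm) hS_new]

theorem IsOnline.mem_selectedBefore_of_eq_off (hon : G.IsOnline sel)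
    (hω : ∀ X, X ≠ S → ω' X = ω X) {n : ℕ} (h : S ∈ selectedBefore sel ω' n) :
    S ∈ selectedBefore sel ω n := by
  obtain ⟨s, hs, hSs⟩ := mem_biUnion.1 h
  obtain ⟨r, hrs, hSr⟩ := hon.exists_mem_select_of_eq_off hω hSs
  exact select_subset_selectedBefore sel ω (hrs.trans_lt (mem_range.1 hs)) hSr

theorem IsOnline.mem_selectedBefore_update_iff (hon : G.IsOnline sel) (ω : H → Bool) (S : H)
    (b : Bool) (n : ℕ) :
    S ∈ selectedBefore sel (update ω S b) n ↔ S ∈ selectedBefore sel ω n :=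
  ⟨hon.mem_selectedBefore_of_eq_off fun _ hX => update_of_ne hX _ _,
    hon.mem_selectedBefore_of_eq_off fun _ hX => (update_of_ne hX _ _).symm⟩

theorem IsOnline.selectedBefore_eq_of_eq_off (hon : G.IsOnline sel)
    (hω : ∀ X, X ≠ S → ω' X = ω X) {n : ℕ} (hS : S ∉ selectedBefore sel ω n) :
    selectedBefore sel ω' n = selectedBefore sel ω n :=
  biUnion_congr rfl fun _ hr => hon.select_eq_of_eq_off hω fun h =>
    hS (selectedBefore_mono sel ω (mem_range.1 hr).le h)

variable {p : H → ℝ} {D A : Finset H} {L : List H}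

theorem IsGreedyRun.not_mem_of_mem (hrun : G.IsGreedyRun p D A L) {B : H} (hB : B ∈ L) :
    B ∉ D ∧ B ∉ A := by
  obtain ⟨i, rfl⟩ := List.mem_iff_get.1 hB
  obtain ⟨hD, hA, -⟩ := (hrun.1 i).1
  exact ⟨hD, fun h => hA (mem_union_left _ h)⟩

/-- The first team of the run that meets `S` was chosen while `S` was still available. -/
theorem IsGreedyRun.exists_blocker (hrun : G.IsGreedyRun p D A L) (hSD : S ∉ D)
    (hSAL : S ∉ A ∪ L.toFinset) (hSA : ∀ T ∈ A, Disjoint (G.mem S) (G.mem T)) :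
    ∃ B ∈ L, p S ≤ p B ∧ ¬ Disjoint (G.mem S) (G.mem B) := by
  classical
  have hex : ∃ j, ∃ hj : j < L.length, ¬ Disjoint (G.mem S) (G.mem L[j]) := by
    obtain ⟨T, hT, hST⟩ : ∃ T ∈ A ∪ L.toFinset, ¬ Disjoint (G.mem S) (G.mem T) := by
      by_contra! h
      exact hrun.2 S ⟨hSD, hSAL, h⟩
    obtain ⟨j, hj, rfl⟩ := List.mem_iff_getElem.1 <| List.mem_toFinset.1 <|
      (mem_union.1 hT).resolve_left fun hTA => hST (hSA T hTA)
    exact ⟨j, hj, hST⟩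
  obtain ⟨hj, hSB⟩ := Nat.find_spec hex
  have havail : G.Avail D (A ∪ (L.take (Nat.find hex)).toFinset) S := by
    refine ⟨hSD, fun h => hSAL ?_, fun T hT => ?_⟩
    · exact union_subset_union_right (fun _ hT =>
        List.mem_toFinset.2 (List.take_subset _ _ (List.mem_toFinset.1 hT))) h
    · rcases mem_union.1 hT with hTA | hTL
      · exact hSA T hTA
      obtain ⟨i, hi, rfl⟩ := List.mem_take_iff_getElem.1 (List.mem_toFinset.1 hTL)
      by_contra hST
      exact Nat.find_min hex (lt_of_lt_of_le hi (min_le_left _ _))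
        ⟨lt_of_lt_of_le hi (min_le_right _ _), hST⟩
  exact ⟨_, List.getElem_mem hj, (hrun.1 ⟨_, hj⟩).2 S havail, hSB⟩

variable {sm alg : (H → Bool) → ℕ → Finset H}

theorem IsSM.filter_select_eq (hsm : G.IsSM p sm) (ω : H → Bool) (t : ℕ) :
    {S ∈ sm ω t | ω S} = {S ∈ selectedBefore sm ω (t + 1) | ω S} := by
  obtain ⟨L, -, hsel⟩ := hsm.2 ω t
  rw [selectedBefore_succ, filter_union, eq_comm, union_eq_right]
  intro S hS
  rw [mem_filter] at hS ⊢
  exact ⟨hsel ▸ mem_union_left _ (mem_filter.2 hS), hS.2⟩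

theorem IsSM.exists_fresh_blocker (hsm : G.IsSM p sm) {ω : H → Bool} {r : ℕ} {S : H}
    (hS : S ∉ selectedBefore sm ω (r + 1))
    (hSA : ∀ T ∈ selectedBefore sm ω r, ω T → Disjoint (G.mem S) (G.mem T)) :
    ∃ B ∈ sm ω r, B ∉ selectedBefore sm ω r ∧ p S ≤ p B ∧
      ¬ Disjoint (G.mem S) (G.mem B) := by
  obtain ⟨L, hrun, hsel⟩ := hsm.2 ω r
  rw [selectedBefore_succ] at hS
  have hSsel : S ∉ sm ω r := fun h => hS (mem_union_right _ h)
  obtain ⟨B, hBL, hpB, hSB⟩ := hrun.exists_blocker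
    (fun h => hS (mem_union_left _ (mem_filter.1 h).1)) (hsel ▸ hSsel)
    (fun T hT => hSA T (mem_filter.1 hT).1 (mem_filter.1 hT).2)
  obtain ⟨hBD, hBA⟩ := hrun.not_mem_of_mem hBL
  refine ⟨B, hsel ▸ mem_union_right _ (List.mem_toFinset.2 hBL), fun hB => ?_, hpB, hSB⟩
  by_cases hωB : ω B
  · exact hBA (mem_filter.2 ⟨hB, hωB⟩)
  · exact hBD (mem_filter.2 ⟨hB, hωB⟩)

def Unblocked (G : TeamStruct V H) (sm alg : (H → Bool) → ℕ → Finset H) (t : ℕ)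
    (ω : H → Bool) (S : H) : Prop :=
  S ∈ alg ω t ∧ ∀ T ∈ selectedBefore sm ω (t + 1), ω T → ¬ G.Clash S T

instance [DecidableEq V] (t : ℕ) (ω : H → Bool) (S : H) :
    Decidable (G.Unblocked sm alg t ω S) :=
  inferInstanceAs (Decidable (_ ∧ ∀ T ∈ _, _))

def BlockedBy (G : TeamStruct V H) (sm alg : (H → Bool) → ℕ → Finset H) (ω : H → Bool)
    (S B : H) : Prop :=
  ∃ r, B ∈ sm ω r ∧ B ∉ selectedBefore sm ω r ∧ S ∈ alg ω r ∧
    ¬ Disjoint (G.mem S) (G.mem B)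

/-- The stable matching process has not selected `S` by round `t`, so it behaves the same
whether or not `S` succeeds. -/
theorem IsSM.exists_blockedBy_of_unblocked (hsm : G.IsSM p sm) (halg : G.IsOnline alg)
    {t : ℕ} {ω : H → Bool} {S : H} (h : G.Unblocked sm alg t (update ω S true) S) :
    ∃ B ∈ selectedBefore sm ω (t + 1), p S ≤ p B ∧ G.BlockedBy sm alg ω S B := by
  have hω : ∀ X, X ≠ S → update ω S true X = ω X := fun _ hX => update_of_ne hX _ _
  have hS' : S ∉ selectedBefore sm (update ω S true) (t + 1) := fun hS =>
    h.2 S hS (update_self S true ω) (Or.inl rfl)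
  have hW := hsm.1.selectedBefore_eq_of_eq_off (fun X hX => (hω X hX).symm) hS'
  obtain ⟨r, hrt, hSr⟩ := halg.exists_mem_select_of_eq_off hω h.1
  have hrW : selectedBefore sm ω (r + 1) ⊆ selectedBefore sm (update ω S true) (t + 1) :=
    hW ▸ selectedBefore_mono sm ω (by omega)
  obtain ⟨B, hB, hB_new, hpB, hSB⟩ := hsm.exists_fresh_blocker (p := p)
    (fun hS => hS' (hrW hS)) fun T hT hωT => by
      have hT' := hrW (selectedBefore_mono sm ω r.le_succ hT)
      have hTS : T ≠ S := by rintro rfl; exact hS' hT'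
      exact not_not.1 (not_or.1 (h.2 T hT' ((hω T hTS).trans hωT))).2
  exact ⟨B, select_subset_selectedBefore sm ω (by omega) hB, hpB, r, hB, hB_new, hSr, hSB⟩

open scoped Classical in
theorem card_filter_blockedBy_le [DecidableEq V] (halg : G.IsOnline alg) (s : Finset H)
    (ω : H → Bool) (B : H) : #{S ∈ s | G.BlockedBy sm alg ω S B} ≤ #(G.mem B) := by
  obtain h | ⟨S₀, hS₀⟩ := {S ∈ s | G.BlockedBy sm alg ω S B}.eq_empty_or_nonempty
  · simp [h]
  obtain ⟨r₀, hB₀, hB₀_new, -⟩ := (mem_filter.1 hS₀).2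
  calc #{S ∈ s | G.BlockedBy sm alg ω S B}
      ≤ #{S ∈ alg ω r₀ | ¬ Disjoint (G.mem S) (G.mem B)} := by
        refine card_le_card fun S hS => ?_
        obtain ⟨r, hB, hB_new, hSr, hSB⟩ := (mem_filter.1 hS).2
        obtain rfl := eq_of_mem_select_of_not_mem_selectedBefore sm ω hB hB_new hB₀ hB₀_new
        exact mem_filter.2 ⟨hSr, hSB⟩
    _ ≤ #(G.mem B) := (halg.1 ω r₀).card_filter_not_disjoint_le _

variable [Fintype H]

theorem IsSM.expectOf_card_filter_select_eq (hsm : G.IsSM p sm) (t : ℕ) :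
    expectOf p (fun ω => (#{S ∈ sm ω t | ω S} : ℝ))
      = expectOf p (fun ω => ∑ T ∈ selectedBefore sm ω (t + 1), p T) := by
  have hfilter : ∀ ω : H → Bool,
      {S ∈ sm ω t | ω S} = ({S | ω S ∧ S ∈ selectedBefore sm ω (t + 1)} : Finset H) :=
    fun ω => by ext S; simp [hsm.filter_select_eq, and_comm]
  simp only [hfilter, expectOf_card_filter fun S ω => S ∈ selectedBefore sm ω (t + 1),
    hsm.1.mem_selectedBefore_update_iff, filter_univ_mem]

variable [DecidableEq V] {k : ℕ}

theorem IsSM.sum_unblocked_le (hsm : G.IsSM p sm) (halg : G.IsOnline alg)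
    (hcard : ∀ S, #(G.mem S) ≤ k) (hp : ∀ S, 0 ≤ p S) (t : ℕ) (ω : H → Bool) :
    ∑ S ∈ {S | G.Unblocked sm alg t (update ω S true) S}, p S
      ≤ k * ∑ T ∈ selectedBefore sm ω (t + 1), p T := by
  classical
  exact sum_le_mul_sum_of_exists_le (G.BlockedBy sm alg ω)
    (fun S hS => hsm.exists_blockedBy_of_unblocked halg (mem_filter.1 hS).2)
    (fun B _ => (card_filter_blockedBy_le halg _ ω B).trans (hcard B)) fun T _ => hp T

theorem card_filter_success_le (hk : 1 ≤ k) (hcard : ∀ S, #(G.mem S) ≤ k)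
    {ω : H → Bool} {t : ℕ} (hM : G.IsHMatching (alg ω t)) :
    #{S ∈ alg ω t | ω S} ≤ k * #{T ∈ selectedBefore sm ω (t + 1) | ω T}
      + #{S | ω S ∧ G.Unblocked sm alg t ω S} := by
  calc #{S ∈ alg ω t | ω S}
      ≤ #(({T ∈ selectedBefore sm ω (t + 1) | ω T}.biUnion
            fun T => {S ∈ alg ω t | G.Clash S T})
          ∪ ({S | ω S ∧ G.Unblocked sm alg t ω S} : Finset H)) := by
        refine card_le_card fun S hS => ?_
        obtain ⟨hSt, hωS⟩ := mem_filter.1 hS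
        by_cases hclash : ∃ T ∈ {T ∈ selectedBefore sm ω (t + 1) | ω T}, G.Clash S T
        · obtain ⟨T, hT, hST⟩ := hclash
          exact mem_union_left _ (mem_biUnion.2 ⟨T, hT, mem_filter.2 ⟨hSt, hST⟩⟩)
        · refine mem_union_right _ (mem_filter.2 ⟨mem_univ _, hωS, hSt, fun T hT hωT hST => ?_⟩)
          exact hclash ⟨T, mem_filter.2 ⟨hT, hωT⟩, hST⟩
    _ ≤ k * #{T ∈ selectedBefore sm ω (t + 1) | ω T}
          + #{S | ω S ∧ G.Unblocked sm alg t ω S} :=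
        (card_union_le _ _).trans <| Nat.add_le_add_right
          (hM.card_biUnion_filter_clash_le _ hk fun T _ => hcard T) _

theorem IsSM.expectOf_card_filter_le (hsm : G.IsSM p sm) (halg : G.IsOnline alg)
    (hk : 1 ≤ k) (hcard : ∀ S, #(G.mem S) ≤ k) (hp : ∀ S, 0 ≤ p S ∧ p S ≤ 1)
    (t : ℕ) :
    expectOf p (fun ω => (#{S ∈ alg ω t | ω S} : ℝ))
      ≤ 2 * k * expectOf p (fun ω => (#{S ∈ sm ω t | ω S} : ℝ)) := by
  have hunblocked : expectOf p (fun ω => (#{S | ω S ∧ G.Unblocked sm alg t ω S} : ℝ))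
      ≤ k * expectOf p (fun ω => (#{S ∈ sm ω t | ω S} : ℝ)) := by
    rw [expectOf_card_filter, hsm.expectOf_card_filter_select_eq, ← expectOf_const_mul]
    exact expectOf_mono hp fun ω => hsm.sum_unblocked_le halg hcard (fun S => (hp S).1) t ω
  calc expectOf p (fun ω => (#{S ∈ alg ω t | ω S} : ℝ))
      ≤ expectOf p (fun ω => k * (#{S ∈ sm ω t | ω S} : ℝ)
          + #{S | ω S ∧ G.Unblocked sm alg t ω S}) := expectOf_mono hp fun ω => by
        rw [hsm.filter_select_eq]
        exact_mod_cast card_filter_success_le hk hcard (halg.1 ω t)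
    _ ≤ 2 * k * expectOf p (fun ω => (#{S ∈ sm ω t | ω S} : ℝ)) := by
        rw [expectOf_add, expectOf_const_mul]
        linarith

end TeamStruct

theorem sm_teams_approximates_opt_general
    {V H : Type} [DecidableEq V] [Fintype H] [DecidableEq H]
    (G : TeamStruct V H) (k : ℕ) (hk : 0 < k) (hcard : ∀ S : H, (G.mem S).card ≤ k)
    (p : H → ℝ) (hp : ∀ S, 0 ≤ p S ∧ p S ≤ 1)
    (T : ℕ) (w : ℕ → ℝ) (hw : ∀ t, 0 ≤ w t)
    (sm alg : (H → Bool) → ℕ → Finset H)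
    (hsm : G.IsSM p sm) (halg : G.IsOnline alg) :
    (1 / (2 * k) : ℝ) * expectedReward p w T alg ≤ expectedReward p w T sm := by
  have hreward : expectedReward p w T alg ≤ 2 * k * expectedReward p w T sm := by
    rw [expectedReward_eq_sum_expectOf, expectedReward_eq_sum_expectOf, mul_sum]
    refine sum_le_sum fun t _ => ?_
    calc w t * expectOf p (fun ω => (#{S ∈ alg ω t | ω S} : ℝ))
        ≤ w t * (2 * k * expectOf p (fun ω => (#{S ∈ sm ω t | ω S} : ℝ))) :=
          mul_le_mul_of_nonneg_left (hsm.expectOf_card_filter_le halg hk hcard hp t) (hw t)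
      _ = 2 * k * (w t * expectOf p (fun ω => (#{S ∈ sm ω t | ω S} : ℝ))) :=
          mul_left_comm _ _ _
  rw [one_div, inv_mul_le_iff₀ (by positivity)]
  exact hreward

/-- In team formation with teams of cardinality at most `k`,
every stable matching process is a `1/(2k)`-approximation to every online
algorithm. -/
theorem sm_teams_approximates_opt
    {V H : Type} [DecidableEq V] [Fintype V] [Fintype H] [DecidableEq H]
    (G : TeamStruct V H) (k : ℕ) (hk : 0 < k) (hcard : ∀ S : H, (G.mem S).card ≤ k)
    (p : H → ℝ) (hp : ∀ S, 0 ≤ p S ∧ p S ≤ 1)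
    (T : ℕ) (w : ℕ → ℝ) (hw : ∀ t, 0 ≤ w t)
    (sm alg : (H → Bool) → ℕ → Finset H)
    (hsm : G.IsSM p sm) (halg : G.IsOnline alg) :
    (1 / (2 * k) : ℝ) * expectedReward p w T alg ≤ expectedReward p w T sm :=
  sm_teams_approximates_opt_general G k hk hcard p hp T w hw sm alg hsm halg
end

section
/- Let G = (V, E) be a finite simple graph with nonnegative edge weights w, and let M be a matching such that every edge e ∈ E shares an endpoint with some edge f ∈ M satisfying w(f) ≥ w(e). Then for every matching M' in G, Σ_{e ∈ M} w(e) ≥ (1/2) · Σ_{e ∈ M'} w(e). -/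
open Finset

/-- A finite simple graph presented via an abstract edge type: each edge has a
set of exactly two endpoints, and distinct edges have distinct endpoint sets. -/
structure GraphEdges (V E : Type) where
  ends : E → Finset V
  card_ends : ∀ e, (ends e).card = 2
  ends_injective : Function.Injective ends

/-- A matching: a set of pairwise endpoint-disjoint edges. -/
def GraphEdges.IsMatching {V E : Type} (G : GraphEdges V E) (M : Finset E) : Prop :=
  ∀ e ∈ M, ∀ f ∈ M, e ≠ f → Disjoint (G.ends e) (G.ends f)

/-! Charge every edge `e` of `M'` to an edge `g e` of `M` that meets it and is at least as
heavy. Since `M'` is a matching, the edges of `M'` charged to `f` meet `f` in distinct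
endpoints, so `f` is charged at most twice; hence `w(M') ≤ ∑ w (g e) ≤ 2 w(M)`. -/

theorem Finset.sum_comp_le_mul_sum_of_card_fiber_le {ι κ R : Type*} [DecidableEq κ]
    [CommSemiring R] [PartialOrder R] [IsOrderedRing R]
    {s : Finset ι} {t : Finset κ} {g : ι → κ} {w : κ → R} {n : ℕ}
    (hg : ∀ i ∈ s, g i ∈ t) (hfiber : ∀ j ∈ t, #{i ∈ s | g i = j} ≤ n)
    (hw : ∀ j ∈ t, 0 ≤ w j) :
    ∑ i ∈ s, w (g i) ≤ n * ∑ j ∈ t, w j := by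
  rw [← sum_fiberwise_of_maps_to hg, mul_sum]
  refine sum_le_sum fun j hj => ?_
  rw [sum_congr rfl fun i hi => by rw [(mem_filter.1 hi).2], sum_const, nsmul_eq_mul]
  exact mul_le_mul_of_nonneg_right (Nat.mono_cast (hfiber j hj)) (hw j hj)

theorem GraphEdges.IsMatching.injOn_of_mem_ends {V E : Type} {G : GraphEdges V E}
    {M : Finset E} (hM : G.IsMatching M) {v : E → V} (hv : ∀ e ∈ M, v e ∈ G.ends e) :
    Set.InjOn v M := by
  intro e he f hf hvef
  by_contra hne
  exact disjoint_left.1 (hM e he f hf hne) (hv e he) (hvef ▸ hv f hf)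

theorem greedy_matching_half_approx_general
    {V E : Type}
    (G : GraphEdges V E) (w : E → ℝ) (hw : ∀ e, 0 ≤ w e)
    (M : Finset E)
    (hgreedy : ∀ e : E, ∃ f ∈ M, (∃ v, v ∈ G.ends e ∧ v ∈ G.ends f) ∧ w e ≤ w f)
    (M' : Finset E) (hM' : G.IsMatching M') :
    (1 / 2 : ℝ) * ∑ e ∈ M', w e ≤ ∑ e ∈ M, w e := by
  classical
  choose g hgM hmeet hwle using hgreedy
  choose v hv hvg using hmeet
  have hfiber : ∀ f ∈ M, #{e ∈ M' | g e = f} ≤ 2 := fun f _ => by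
    rw [← G.card_ends f]
    refine card_le_card_of_injOn v (fun e he => ?_)
      ((hM'.injOn_of_mem_ends fun e _ => hv e).mono (filter_subset _ _))
    obtain ⟨-, rfl⟩ := mem_filter.1 he
    exact hvg e
  have hcharge : ∑ e ∈ M', w (g e) ≤ 2 * ∑ f ∈ M, w f := by
    exact_mod_cast sum_comp_le_mul_sum_of_card_fiber_le (fun e _ => hgM e) hfiber fun f _ => hw f
  calc (1 / 2 : ℝ) * ∑ e ∈ M', w e ≤ 1 / 2 * ∑ e ∈ M', w (g e) := by
        gcongr with e; exact hwle e
    _ ≤ 1 / 2 * (2 * ∑ f ∈ M, w f) := by gcongr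
    _ = ∑ f ∈ M, w f := by ring

/-- If `M` is a matching such that every edge of the graph
shares an endpoint with some edge of `M` of at least its weight, then `M` is a
`1/2`-approximation to every matching in total weight. -/
theorem greedy_matching_half_approx
    {V E : Type} [Fintype E]
    (G : GraphEdges V E) (w : E → ℝ) (hw : ∀ e, 0 ≤ w e)
    (M : Finset E) (hM : G.IsMatching M)
    (hgreedy : ∀ e : E, ∃ f ∈ M, (∃ v, v ∈ G.ends e ∧ v ∈ G.ends f) ∧ w e ≤ w f)
    (M' : Finset E) (hM' : G.IsMatching M') :
    (1 / 2 : ℝ) * ∑ e ∈ M', w e ≤ ∑ e ∈ M, w e :=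
  greedy_matching_half_approx_general G w hw M hgreedy M' hM'
end
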